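/- If the computed quantities satisfy the hypotheses: ‖δ_{w_{k-1}}‖ ≤ ε c ‖A‖ ‖r_{k-1}‖, ‖δ_{w_k}‖ ≤ ε c ‖A‖ ‖r_k‖, ‖δ_{u_{k-1}}‖ ≤ ε c ‖A‖ ‖s_{k-1}‖, ‖δ_{r_k}‖ ≤ 3ε(‖r_{k-1}‖ + ‖r_k‖), ‖δ_{w'_k}‖ ≤ 3ε‖A‖(‖r_{k-1}‖ + ‖r_k‖), and |α_{k-1}|·‖s_{k-1}‖ ≤ ‖r_{k-1}‖ + ‖r_k‖ + ‖δ_{r_k}‖, then ‖w_k − w'_k‖ ≤ ‖δ_{w_{k-1}}‖ + ‖δ_{w_k}‖ + |α_{k-1}|‖δ_{u_{k-1}}‖ + ‖A‖‖δ_{r_k}‖ + ‖δ_{w'_k}‖ ≤ 2(c+3)ε‖A‖(‖r_{k-1}‖ + ‖r_k‖) + 3cε²‖A‖(‖r_{k-1}‖ + ‖r_k‖). -/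
import Mathlib


open scoped RealInnerProductSpace

/-- Assembly of the `w`-gap bound `Δ_{w'_k} ≤ 2(c+3)ε‖A‖(‖r_{k-1}‖+‖r_k‖)`,
with the `O(ε²)` term kept explicitly. -/
theorem w_gap_assembled_bound (n : ℕ) (ε c : ℝ) (hε : 0 < ε) (hc : 0 < c)
    (A : EuclideanSpace ℝ (Fin n) →L[ℝ] EuclideanSpace ℝ (Fin n))
    (rkm rk skm wk wk' δwm δw δu δr δw' : EuclideanSpace ℝ (Fin n)) (α : ℝ)
    (htel : wk - wk' = -δwm + δw + α • δu + A δr - δw')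
    (h1 : ‖δwm‖ ≤ ε * c * ‖A‖ * ‖rkm‖)
    (h2 : ‖δw‖ ≤ ε * c * ‖A‖ * ‖rk‖)
    (h3 : ‖δu‖ ≤ ε * c * ‖A‖ * ‖skm‖)
    (h4 : ‖δr‖ ≤ 3 * ε * (‖rkm‖ + ‖rk‖))
    (h5 : ‖δw'‖ ≤ 3 * ε * ‖A‖ * (‖rkm‖ + ‖rk‖))
    (h6 : |α| * ‖skm‖ ≤ ‖rkm‖ + ‖rk‖ + ‖δr‖) :
    ‖wk - wk'‖ ≤ ‖δwm‖ + ‖δw‖ + |α| * ‖δu‖ + ‖A‖ * ‖δr‖ + ‖δw'‖ ∧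
      ‖δwm‖ + ‖δw‖ + |α| * ‖δu‖ + ‖A‖ * ‖δr‖ + ‖δw'‖ ≤
        2 * (c + 3) * ε * ‖A‖ * (‖rkm‖ + ‖rk‖) +
          3 * c * ε ^ 2 * ‖A‖ * (‖rkm‖ + ‖rk‖) := by
  have hA : (0:ℝ) ≤ ‖A‖ := norm_nonneg _
  have hεn : (0:ℝ) ≤ ε := hε.le
  have hcn : (0:ℝ) ≤ c := hc.le
  constructor
  · rw [htel]
    calc ‖-δwm + δw + α • δu + A δr - δw'‖
        ≤ ‖-δwm + δw + α • δu + A δr‖ + ‖δw'‖ := norm_sub_le _ _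
      _ ≤ ‖-δwm + δw + α • δu‖ + ‖A δr‖ + ‖δw'‖ := by
          gcongr; exact norm_add_le _ _
      _ ≤ ‖-δwm + δw‖ + ‖α • δu‖ + ‖A δr‖ + ‖δw'‖ := by
          gcongr; exact norm_add_le _ _
      _ ≤ ‖δwm‖ + ‖δw‖ + |α| * ‖δu‖ + ‖A‖ * ‖δr‖ + ‖δw'‖ := by
          have e1 : ‖-δwm + δw‖ ≤ ‖δwm‖ + ‖δw‖ := by
            calc ‖-δwm + δw‖ ≤ ‖-δwm‖ + ‖δw‖ := norm_add_le _ _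
              _ = ‖δwm‖ + ‖δw‖ := by rw [norm_neg]
          have e2 : ‖α • δu‖ ≤ |α| * ‖δu‖ := by
            rw [norm_smul, Real.norm_eq_abs]
          have e3 : ‖A δr‖ ≤ ‖A‖ * ‖δr‖ := A.le_opNorm _
          linarith
  · have hαu : |α| * ‖δu‖ ≤ ε * c * ‖A‖ * (‖rkm‖ + ‖rk‖ + ‖δr‖) := by
      calc |α| * ‖δu‖ ≤ |α| * (ε * c * ‖A‖ * ‖skm‖) := by
            gcongr
        _ = ε * c * ‖A‖ * (|α| * ‖skm‖) := by ring
        _ ≤ ε * c * ‖A‖ * (‖rkm‖ + ‖rk‖ + ‖δr‖) := by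
            gcongr
    have := mul_le_mul_of_nonneg_left h4 hA
    nlinarith [mul_le_mul_of_nonneg_left h4 (mul_nonneg (mul_nonneg hεn hcn) hA)]
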